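/- arXiv:1906.02904 — 3 statements merged into one kernel-verified Lean document; each statement's English description precedes it below -/
import Mathlib

section
/- Let h ∈ ℕ^n be a nonincreasing supply profile and r ∈ ℕ^m a duration profile with each r_i ≤ n. Then there exists an m×n (0,1)-matrix A with row sums exactly r_i and column sums at most h_j if and only if for every k with 0 ≤ k ≤ n−1, ∑_{j=k+1}^{n} h_j ≥ ∑_{i=1}^{m} max(r_i − k, 0). -/
/-!
Necessity: a load can run at most `k` times before slot `k`, so at least `r i - k` of its units
lie in the tail `{j ≥ k}`, whose total capacity is the tail supply.

Sufficiency, by induction on the number of slots: serve slot `0` (the largest capacity) greedily,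
giving one unit to the `min (h 0) #{i | 0 < r i}` loads with the longest remaining durations.
The tail condition survives for the residual durations on the remaining slots: at level `k`
either every load still longer than `k` was served, and the condition at `k + 1` suffices, or
slot `0` was filled with `h 0 ≥ h k` such loads, and the condition at `k` suffices.
-/

open Finset

lemma exists_subset_card_eq_forall_le {α β : Type*} [DecidableEq α] [LinearOrder β]
    (f : α → β) (s : Finset α) {c : ℕ} (hc : c ≤ #s) :
    ∃ t ⊆ s, #t = c ∧ ∀ i ∈ t, ∀ j ∈ s \ t, f j ≤ f i := by
  induction c generalizing s with
  | zero => exact ⟨∅, empty_subset s, rfl, by simp⟩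
  | succ c ih =>
    obtain ⟨x, hxs, hxmax⟩ := s.exists_max_image f (card_pos.mp (by omega))
    obtain ⟨t, hts, htc, htop⟩ := ih (s.erase x) (by rw [card_erase_of_mem hxs]; omega)
    have hxt : x ∉ t := fun hx => (mem_erase.mp (hts hx)).1 rfl
    refine ⟨insert x t, insert_subset hxs (hts.trans (erase_subset x s)), ?_, ?_⟩
    · rw [card_insert_of_notMem hxt, htc]
    · intro i hi j hj
      obtain ⟨hjs, hjt⟩ := mem_sdiff.mp hj
      rcases mem_insert.mp hi with rfl | hit
      · exact hxmax j hjs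
      · refine htop i hit j (mem_sdiff.mpr ⟨mem_erase.mpr ⟨?_, hjs⟩, ?_⟩)
        · rintro rfl; exact hjt (mem_insert_self _ _)
        · exact fun hjt' => hjt (mem_insert_of_mem hjt')

section

variable {ι : Type*} [Fintype ι] {n : ℕ}

def tailSupply (h : Fin n → ℕ) (k : ℕ) : ℕ :=
  ∑ j ∈ univ.filter (fun j : Fin n => k ≤ j.val), h j

def tailDemand (r : ι → ℕ) (k : ℕ) : ℕ :=
  ∑ i, (r i - k)

def IsAllocation (h : Fin n → ℕ) (r : ι → ℕ) (A : ι → Fin n → ℕ) : Prop :=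
  (∀ i j, A i j ≤ 1) ∧ (∀ i, ∑ j, A i j = r i) ∧ (∀ j, ∑ i, A i j ≤ h j)

/-- Quantifying over all `k`, not only `k < n`, builds in `r i ≤ n` (take `k = n`). -/
def IsAdequate (h : Fin n → ℕ) (r : ι → ℕ) : Prop :=
  ∀ k, tailDemand r k ≤ tailSupply h k

lemma tailSupply_eq_zero_of_le (h : Fin n → ℕ) {k : ℕ} (hk : n ≤ k) : tailSupply h k = 0 :=
  sum_eq_zero fun j hj => absurd (mem_filter.mp hj).2 (by omega)

lemma tailSupply_eq_add (h : Fin n → ℕ) {k : ℕ} (hk : k < n) :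
    tailSupply h k = h ⟨k, hk⟩ + tailSupply h (k + 1) := by
  have : univ.filter (fun j : Fin n => k ≤ j.val)
      = insert ⟨k, hk⟩ (univ.filter fun j : Fin n => k + 1 ≤ j.val) := by
    ext j; simp only [mem_filter, mem_univ, true_and, mem_insert, Fin.ext_iff]; omega
  rw [tailSupply, this, sum_insert (by simp)]
  rfl

lemma tailSupply_succ (h : Fin (n + 1) → ℕ) (k : ℕ) :
    tailSupply h (k + 1) = tailSupply (Fin.tail h) k := by
  simp [tailSupply, sum_filter, Fin.sum_univ_succ, Fin.tail]

lemma tailSupply_le_head_add {h : Fin (n + 1) → ℕ} (hh : Antitone h) (k : ℕ) :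
    tailSupply h k ≤ h 0 + tailSupply h (k + 1) := by
  rcases lt_or_ge k (n + 1) with hk | hk
  · rw [tailSupply_eq_add h hk]
    grw [hh (Fin.zero_le _)]
  · simp [tailSupply_eq_zero_of_le h hk]

lemma tailDemand_eq_succ_add_card (r : ι → ℕ) (k : ℕ) :
    tailDemand r k = tailDemand r (k + 1) + #{i | k < r i} := by
  rw [tailDemand, tailDemand, card_filter, ← sum_add_distrib]
  exact sum_congr rfl fun i _ => by split_ifs <;> omega

lemma tailDemand_sub_indicator [DecidableEq ι] (r : ι → ℕ) {S : Finset ι}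
    (hS : ∀ i ∈ S, 0 < r i) (k : ℕ) :
    tailDemand (fun i => r i - if i ∈ S then 1 else 0) k
      = tailDemand r (k + 1) + #((univ.filter fun i => k < r i) \ S) := by
  rw [tailDemand, tailDemand, sdiff_eq_filter, filter_filter, card_filter, ← sum_add_distrib]
  refine sum_congr rfl fun i _ => ?_
  by_cases hi : i ∈ S
  · have := hS i hi
    simp only [hi, if_true, not_true, and_false, if_false]
    omega
  · simp only [hi, if_false, not_false_iff, and_true]
    split_ifs <;> omega

theorem IsAllocation.tailDemand_le {h : Fin n → ℕ} {r : ι → ℕ} {A : ι → Fin n → ℕ}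
    (hA : IsAllocation h r A) (k : ℕ) : tailDemand r k ≤ tailSupply h k := by
  obtain ⟨hA01, hrow, hcol⟩ := hA
  have hhead (i : ι) : ∑ j ∈ univ.filter (fun j : Fin n => ¬ k ≤ j.val), A i j ≤ k :=
    calc _ ≤ #{j : Fin n | ¬ k ≤ j.val} := by
          rw [card_eq_sum_ones]; exact sum_le_sum fun j _ => hA01 i j
      _ = min n k := by simp only [not_le]; exact Fin.card_filter_val_lt
      _ ≤ k := min_le_right _ _
  calc tailDemand r k
      ≤ ∑ i, ∑ j ∈ univ.filter (fun j : Fin n => k ≤ j.val), A i j := by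
        refine sum_le_sum fun i _ => ?_
        have := sum_filter_add_sum_filter_not univ (fun j : Fin n => k ≤ j.val) (A i)
        have := hhead i
        have := hrow i
        omega
    _ = ∑ j ∈ univ.filter (fun j : Fin n => k ≤ j.val), ∑ i, A i j := sum_comm
    _ ≤ tailSupply h k := sum_le_sum fun j _ => hcol j

lemma exists_greedy_column [DecidableEq ι] (r : ι → ℕ) (c : ℕ) :
    ∃ S : Finset ι, (∀ i ∈ S, 0 < r i) ∧ #S ≤ c ∧
      ∀ j ∉ S, 0 < r j → #S = c ∧ ∀ i ∈ S, r j ≤ r i := by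
  set P := univ.filter fun i => 0 < r i
  obtain ⟨S, hSP, hcard, htop⟩ :=
    exists_subset_card_eq_forall_le r P (min_le_right c #P)
  refine ⟨S, fun i hi => (mem_filter.mp (hSP hi)).2, hcard ▸ min_le_left _ _,
    fun j hjS hj => ?_⟩
  have hjP : j ∈ P \ S := mem_sdiff.mpr ⟨mem_filter.mpr ⟨mem_univ j, hj⟩, hjS⟩
  refine ⟨?_, fun i hi => htop i hi j hjP⟩
  by_contra hne
  have hSP' : S = P := eq_of_subset_of_card_le hSP (by omega)
  exact (mem_sdiff.mp hjP).2 (hSP' ▸ (mem_sdiff.mp hjP).1)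

lemma IsAdequate.tail [DecidableEq ι] {h : Fin (n + 1) → ℕ} {r : ι → ℕ} (hh : Antitone h)
    (had : IsAdequate h r) {S : Finset ι} (hpos : ∀ i ∈ S, 0 < r i)
    (hgreedy : ∀ j ∉ S, 0 < r j → #S = h 0 ∧ ∀ i ∈ S, r j ≤ r i) :
    IsAdequate (Fin.tail h) (fun i => r i - if i ∈ S then 1 else 0) := by
  intro k
  rw [tailDemand_sub_indicator r hpos, ← tailSupply_succ]
  rcases ((univ.filter fun i => k < r i) \ S).eq_empty_or_nonempty with hW | ⟨j, hj⟩
  · rw [hW, card_empty, add_zero]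
    exact had (k + 1)
  · obtain ⟨hjF, hjS⟩ := mem_sdiff.mp hj
    have hjk : k < r j := (mem_filter.mp hjF).2
    obtain ⟨hfull, htop⟩ := hgreedy j hjS (by omega)
    have hSk : S ⊆ univ.filter fun i => k < r i :=
      fun i hi => mem_filter.mpr ⟨mem_univ i, hjk.trans_le (htop i hi)⟩
    have hcard := card_sdiff_add_card_eq_card hSk
    have hk := had k
    rw [tailDemand_eq_succ_add_card] at hk
    have := tailSupply_le_head_add hh k
    omega

theorem IsAdequate.exists_isAllocation [DecidableEq ι] {h : Fin n → ℕ} {r : ι → ℕ}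
    (hh : Antitone h) (had : IsAdequate h r) : ∃ A, IsAllocation h r A := by
  induction n generalizing r with
  | zero =>
    have hr : ∑ i, r i = 0 := by
      simpa [tailDemand, tailSupply_eq_zero_of_le h le_rfl] using had 0
    refine ⟨fun _ => Fin.elim0, fun _ j => j.elim0, fun i => ?_, fun j => j.elim0⟩
    simp [(sum_eq_zero_iff.mp hr) i (mem_univ i)]
  | succ n ih =>
    obtain ⟨S, hpos, hcard, hgreedy⟩ := exists_greedy_column r (h 0)
    obtain ⟨A, hA01, hrow, hcol⟩ :=
      ih (hh.comp_monotone Fin.strictMono_succ.monotone) (had.tail hh hpos hgreedy)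
    refine ⟨fun i => Fin.cons (if i ∈ S then 1 else 0) (A i), fun i j => ?_, fun i => ?_,
      fun j => ?_⟩
    · cases j using Fin.cases
      · simp only [Fin.cons_zero]; split_ifs <;> omega
      · exact hA01 i _
    · rw [Fin.sum_cons, hrow i]
      by_cases hi : i ∈ S
      · have := hpos i hi
        simp only [hi, if_true]; omega
      · simp [hi]
    · cases j using Fin.cases
      · simpa [sum_boole] using hcard
      · exact hcol _

theorem isAdequate_iff_exists_isAllocation [DecidableEq ι] {h : Fin n → ℕ} {r : ι → ℕ}
    (hh : Antitone h) : IsAdequate h r ↔ ∃ A, IsAllocation h r A :=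
  ⟨IsAdequate.exists_isAllocation hh, fun ⟨_, hA⟩ => hA.tailDemand_le⟩

lemma isAdequate_iff_forall_lt {h : Fin n → ℕ} {r : ι → ℕ} (hr : ∀ i, r i ≤ n) :
    IsAdequate h r ↔ ∀ k < n, tailDemand r k ≤ tailSupply h k := by
  refine ⟨fun had k _ => had k, fun hlt k => ?_⟩
  rcases lt_or_ge k n with hk | hk
  · exact hlt k hk
  · have : tailDemand r k = 0 := sum_eq_zero fun i _ => Nat.sub_eq_zero_of_le ((hr i).trans hk)
    simp [this]

end

/-- Gale–Ryser style adequacy criterion for duration-differentiated energy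
services: a feasible (0,1) allocation with row sums `r i` and column sums at
most `h j` exists iff every supply tail dominates the corresponding demand
tail.  (Slots are 0-indexed; `∑_{j=k+1}^n h_j` is the sum over `j.val ≥ k`,
and `r i - k` is truncated subtraction, i.e. `max (r i - k) 0`.) -/
theorem stmt0 (m n : ℕ) (h : Fin n → ℕ) (r : Fin m → ℕ)
    (hmono : ∀ i j : Fin n, i ≤ j → h j ≤ h i)
    (hr : ∀ i, r i ≤ n) :
    (∃ A : Fin m → Fin n → ℕ,
      (∀ i j, A i j ≤ 1) ∧
      (∀ i, ∑ j, A i j = r i) ∧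
      (∀ j, ∑ i, A i j ≤ h j)) ↔
    (∀ k < n,
      ∑ i, (r i - k) ≤ ∑ j ∈ Finset.univ.filter (fun j : Fin n => k ≤ j.val), h j) :=
  (isAdequate_iff_exists_isAllocation hmono).symm.trans (isAdequate_iff_forall_lt hr)
end

section
/- Let h ∈ ℕ^n satisfy within-block monotonicity (h_i ≥ h_j whenever n_{κ−1}+1 ≤ i < j ≤ n_κ for each κ). Then the supply h is adequate for the demand (r,a,d), i.e., a feasible (0,1) allocation matrix exists, if and only if for every index vector (k_1,...,k_ν) with 0 ≤ k_κ ≤ n_κ − n_{κ−1}, we have ∑_{κ=1}^{ν} ∑_{j=n_{κ−1}+k_κ+1}^{n_κ} h_j ≥ ∑_{i=1}^{m} max(r_i − ∑_{κ=a_i+1}^{d_i} k_κ, 0). -/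
open Finset

-- transfer: Fin filter interval ↔ ℕ Ico
lemma sum_finfilter {n : ℕ} (h : Fin n → ℕ) (H : ℕ → ℕ)
    (hH : ∀ (x : ℕ) (hx : x < n), H x = h ⟨x, hx⟩) (lo hi : ℕ) (hn : hi ≤ n) :
    ∑ j ∈ univ.filter (fun j : Fin n => lo ≤ j.val ∧ j.val < hi), h j
      = ∑ x ∈ Finset.Ico lo hi, H x := by
  refine (Finset.sum_bij (fun (x : ℕ) (hx : x ∈ Finset.Ico lo hi) =>
    (⟨x, lt_of_lt_of_le (Finset.mem_Ico.1 hx).2 hn⟩ : Fin n)) ?_ ?_ ?_ ?_).symm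
  · intro x hx
    simp only [mem_filter, mem_univ, true_and]
    exact ⟨(Finset.mem_Ico.1 hx).1, (Finset.mem_Ico.1 hx).2⟩
  · intro x hx y hy hxy
    simpa using congrArg Fin.val hxy
  · intro j hj
    simp only [mem_filter, mem_univ, true_and] at hj
    exact ⟨j.val, Finset.mem_Ico.2 hj, rfl⟩
  · intro x hx
    exact hH x _

lemma card_finfilter {n : ℕ} (lo hi : ℕ) (hn : hi ≤ n) :
    (univ.filter (fun j : Fin n => lo ≤ j.val ∧ j.val < hi)).card = hi - lo := by
  have h1 := sum_finfilter (fun _ : Fin n => 1) (fun _ => 1) (fun _ _ => rfl) lo hi hn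
  rw [Finset.card_eq_sum_ones, h1, ← Finset.card_eq_sum_ones, Nat.card_Ico]

-- suffix of an antitone function minimizes sums among subsets of given card
lemma suffix_min (H : ℕ → ℕ) (lo : ℕ) :
    ∀ hi, (∀ x y, lo ≤ x → x ≤ y → y < hi → H y ≤ H x) →
    ∀ T : Finset ℕ, T ⊆ Finset.Ico lo hi →
      ∑ j ∈ Finset.Ico (hi - T.card) hi, H j ≤ ∑ j ∈ T, H j := by
  intro hi
  induction hi with
  | zero =>
    intro _ T hT
    have : T = ∅ := Finset.subset_empty.1 (by simpa using hT)
    simp [this]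
  | succ hi ih =>
    intro hmono T hT
    by_cases hmem : hi ∈ T
    · set T' := T.erase hi with hT'
      have hT'sub : T' ⊆ Finset.Ico lo hi := by
        intro x hx
        have hx1 := Finset.mem_of_mem_erase hx
        have hx2 := Finset.ne_of_mem_erase hx
        have := hT hx1
        rw [Finset.mem_Ico] at this ⊢
        exact ⟨this.1, lt_of_le_of_ne (Nat.lt_succ_iff.1 this.2) hx2⟩
      have hc : T.card = T'.card + 1 := by
        rw [hT', Finset.card_erase_of_mem hmem]
        have : 0 < T.card := Finset.card_pos.2 ⟨hi, hmem⟩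
        omega
      have ihh := ih (fun x y hx hxy hy => hmono x y hx hxy (Nat.lt_succ_of_lt hy)) T' hT'sub
      have hcle : T'.card ≤ hi - lo := by
        simpa using Finset.card_le_card hT'sub
      have hsplit : ∑ j ∈ Finset.Ico (hi + 1 - T.card) (hi + 1), H j
          = ∑ j ∈ Finset.Ico (hi - T'.card) hi, H j + H hi := by
        rw [show hi + 1 - T.card = hi - T'.card by omega]
        exact Finset.sum_Ico_succ_top (by omega) H
      have hTsplit : ∑ j ∈ T, H j = ∑ j ∈ T', H j + H hi := by
        rw [hT']
        exact (Finset.sum_erase_add T H hmem).symm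
      omega
    · have hTsub : T ⊆ Finset.Ico lo hi := by
        intro x hx
        have := hT hx
        rw [Finset.mem_Ico] at this ⊢
        refine ⟨this.1, lt_of_le_of_ne (Nat.lt_succ_iff.1 this.2) ?_⟩
        rintro rfl; exact hmem hx
      have ihh := ih (fun x y hx hxy hy => hmono x y hx hxy (Nat.lt_succ_of_lt hy)) T hTsub
      have hcle : T.card ≤ hi - lo := by simpa using Finset.card_le_card hTsub
      rcases Nat.eq_zero_or_pos T.card with hc0 | hcpos
      · simp [hc0]
      -- shift: ∑_{Ico (hi+1-c) (hi+1)} H ≤ ∑_{Ico (hi-c) hi} H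
      have hshift : ∑ j ∈ Finset.Ico (hi + 1 - T.card) (hi + 1), H j
          ≤ ∑ j ∈ Finset.Ico (hi - T.card) hi, H j := by
        have hre : Finset.Ico (hi + 1 - T.card) (hi + 1)
            = (Finset.Ico (hi - T.card) hi).map (addRightEmbedding 1) := by
          rw [Finset.map_add_right_Ico]
          congr 1 <;> omega
        rw [hre, Finset.sum_map]
        apply Finset.sum_le_sum
        intro x hx
        rw [Finset.mem_Ico] at hx
        exact hmono x (x + 1) (by omega) (by omega) (by simpa [addRightEmbedding] using by omega)
      exact le_trans hshift ihh

lemma sdiff_card_modular {α : Type*} [DecidableEq α] (Wi S T : Finset α) :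
    (Wi \ (S ∪ T)).card + (Wi \ (S ∩ T)).card = (Wi \ S).card + (Wi \ T).card
    ∧ (Wi \ (S ∪ T)).card ≤ (Wi \ S).card ∧ (Wi \ (S ∪ T)).card ≤ (Wi \ T).card := by
  have e1 : Wi \ (S ∪ T) = (Wi \ S) ∩ (Wi \ T) := by
    ext x; simp only [mem_sdiff, mem_union, mem_inter]; tauto
  have e2 : Wi \ (S ∩ T) = (Wi \ S) ∪ (Wi \ T) := by
    ext x; simp only [mem_sdiff, mem_union, mem_inter]; tauto
  refine ⟨?_, ?_, ?_⟩
  · rw [e1, e2]; exact Finset.card_inter_add_card_union _ _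
  · exact Finset.card_le_card (by rw [e1]; exact Finset.inter_subset_left)
  · exact Finset.card_le_card (by rw [e1]; exact Finset.inter_subset_right)

lemma aux_exists {m n : ℕ} (N : ℕ) :
    ∀ (r : Fin m → ℕ) (h : Fin n → ℕ) (W : Fin m → Finset (Fin n)),
    (∑ i, r i = N) →
    (∀ S : Finset (Fin n), ∑ i, (r i - ((W i) \ S).card) ≤ ∑ j ∈ S, h j) →
    ∃ A : Fin m → Fin n → ℕ, (∀ i j, A i j ≤ 1) ∧ (∀ i, ∑ j, A i j = r i) ∧
      (∀ i j, A i j ≠ 0 → j ∈ W i) ∧ (∀ j, ∑ i, A i j ≤ h j) := by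
  induction N with
  | zero =>
    intro r h W hsum _
    have hr0 : ∀ i, r i = 0 := fun i => Finset.sum_eq_zero_iff.1 hsum i (mem_univ i)
    exact ⟨fun _ _ => 0, fun _ _ => Nat.zero_le 1, fun i => by simp [hr0 i],
      fun i j hij => absurd rfl hij, fun j => by simp⟩
  | succ N ih =>
    intro r h W hsum C
    classical
    have hex : ∃ i₀, 0 < r i₀ := by
      by_contra hc
      push_neg at hc
      have : ∑ i, r i = 0 := Finset.sum_eq_zero (fun i _ => by have := hc i; omega)
      omega
    obtain ⟨i₀, hi₀⟩ := hex
    have hWcard : ∀ i, r i ≤ (W i).card := by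
      intro i
      have h0 := C ∅
      simp only [Finset.sum_empty, Nat.le_zero, Finset.sdiff_empty] at h0
      have := Finset.sum_eq_zero_iff.1 h0 i (mem_univ i)
      omega
    set Bad : Finset (Fin n) → Prop :=
      fun S => (∑ i, (r i - ((W i) \ S).card) = ∑ j ∈ S, h j)
        ∧ r i₀ ≤ ((W i₀) \ S).card with hBadDef
    have hBadIff : ∀ S, Bad S ↔ ((∑ i, (r i - ((W i) \ S).card) = ∑ j ∈ S, h j)
        ∧ r i₀ ≤ ((W i₀) \ S).card) := fun S => Iff.rfl
    have bad_empty : Bad ∅ := by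
      rw [hBadIff]
      constructor
      · rw [Finset.sum_empty]
        exact Finset.sum_eq_zero (fun i _ => by
          have := hWcard i; simp only [Finset.sdiff_empty]; omega)
      · simpa using hWcard i₀
    have bad_union : ∀ S T, Bad S → Bad T → Bad (S ∪ T) := by
      intro S T hS hT
      rw [hBadIff] at hS hT ⊢
      have key : ∀ i : Fin m,
          (r i - (W i \ S).card) + (r i - (W i \ T).card)
          ≤ (r i - (W i \ (S ∪ T)).card) + (r i - (W i \ (S ∩ T)).card) := by
        intro i
        obtain ⟨hm, h1, h2⟩ := sdiff_card_modular (W i) S T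
        omega
      have hsum_le : ∑ i, (r i - (W i \ S).card) + ∑ i, (r i - (W i \ T).card)
          ≤ ∑ i, (r i - (W i \ (S ∪ T)).card) + ∑ i, (r i - (W i \ (S ∩ T)).card) := by
        rw [← Finset.sum_add_distrib, ← Finset.sum_add_distrib]
        exact Finset.sum_le_sum (fun i _ => key i)
      have hmod : ∑ j ∈ S ∪ T, h j + ∑ j ∈ S ∩ T, h j = ∑ j ∈ S, h j + ∑ j ∈ T, h j :=
        Finset.sum_union_inter
      have hCu := C (S ∪ T)
      have hCi := C (S ∩ T)
      have heq1 : ∑ i, (r i - (W i \ (S ∪ T)).card) = ∑ j ∈ S ∪ T, h j := by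
        have := hS.1; have := hT.1; omega
      refine ⟨heq1, ?_⟩
      have hsum_eq : ∑ i, (r i - (W i \ S).card) + ∑ i, (r i - (W i \ T).card)
          = ∑ i, (r i - (W i \ (S ∪ T)).card) + ∑ i, (r i - (W i \ (S ∩ T)).card) := by
        have := hS.1; have := hT.1; omega
      have hpt : (r i₀ - (W i₀ \ (S ∪ T)).card) + (r i₀ - (W i₀ \ (S ∩ T)).card)
          = (r i₀ - (W i₀ \ S).card) + (r i₀ - (W i₀ \ T).card) := by
        by_contra hne
        have hlt : (r i₀ - (W i₀ \ S).card) + (r i₀ - (W i₀ \ T).card)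
            < (r i₀ - (W i₀ \ (S ∪ T)).card) + (r i₀ - (W i₀ \ (S ∩ T)).card) :=
          lt_of_le_of_ne (key i₀) (fun e => hne e.symm)
        have hslt : ∑ i, (r i - (W i \ S).card) + ∑ i, (r i - (W i \ T).card)
            < ∑ i, (r i - (W i \ (S ∪ T)).card) + ∑ i, (r i - (W i \ (S ∩ T)).card) := by
          rw [← Finset.sum_add_distrib, ← Finset.sum_add_distrib]
          exact Finset.sum_lt_sum (fun i _ => key i) ⟨i₀, mem_univ i₀, hlt⟩
        omega
      have := hS.2; have := hT.2
      omega
    obtain ⟨U, hUmem, hUmax⟩ := Finset.exists_max_image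
      ((univ : Finset (Finset (Fin n))).filter Bad) Finset.card
      ⟨∅, Finset.mem_filter.2 ⟨mem_univ _, bad_empty⟩⟩
    have hUbad : Bad U := (Finset.mem_filter.1 hUmem).2
    have hUall : ∀ S, Bad S → S ⊆ U := by
      intro S hS
      have hb := bad_union S U hS hUbad
      have hc : (S ∪ U).card ≤ U.card :=
        hUmax _ (Finset.mem_filter.2 ⟨mem_univ _, hb⟩)
      have : S ∪ U = U := (Finset.eq_of_subset_of_card_le Finset.subset_union_right hc).symm
      exact this ▸ Finset.subset_union_left
    rw [hBadIff] at hUbad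
    have hj0ex : ∃ j₀ ∈ (W i₀) \ U, 0 < h j₀ := by
      by_contra hc
      push_neg at hc
      have hzero : ∀ j ∈ (W i₀) \ U, h j = 0 := fun j hj => by have := hc j hj; omega
      have hsupV : ∑ j ∈ U ∪ W i₀, h j = ∑ j ∈ U, h j := by
        have hV : U ∪ W i₀ = U ∪ ((W i₀) \ U) := by
          rw [Finset.union_sdiff_self_eq_union]
        rw [hV, Finset.sum_union Finset.disjoint_sdiff, Finset.sum_eq_zero hzero]
        omega
      have hrest : ∑ i ∈ univ.erase i₀, (r i - (W i \ U).card)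
          ≤ ∑ i ∈ univ.erase i₀, (r i - (W i \ (U ∪ W i₀)).card) := by
        apply Finset.sum_le_sum
        intro i _
        have hsub : (W i \ (U ∪ W i₀)) ⊆ (W i \ U) :=
          Finset.sdiff_subset_sdiff (Finset.Subset.refl _) Finset.subset_union_left
        have := Finset.card_le_card hsub
        omega
      have htermV : r i₀ - (W i₀ \ (U ∪ W i₀)).card = r i₀ := by
        have he : W i₀ \ (U ∪ W i₀) = ∅ :=
          Finset.sdiff_eq_empty_iff_subset.2 Finset.subset_union_right
        rw [he]; simp
      have hCV := C (U ∪ W i₀)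
      have hsplitU : ∑ i ∈ univ.erase i₀, (r i - (W i \ U).card) + (r i₀ - (W i₀ \ U).card)
          = ∑ i, (r i - (W i \ U).card) := Finset.sum_erase_add _ _ (mem_univ i₀)
      have hsplitV : ∑ i ∈ univ.erase i₀, (r i - (W i \ (U ∪ W i₀)).card)
            + (r i₀ - (W i₀ \ (U ∪ W i₀)).card)
          = ∑ i, (r i - (W i \ (U ∪ W i₀)).card) := Finset.sum_erase_add _ _ (mem_univ i₀)
      have hUeq := hUbad.1
      have hU2 := hUbad.2
      omega
    obtain ⟨j₀, hj₀mem, hj₀pos⟩ := hj0ex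
    have hj₀W : j₀ ∈ W i₀ := (Finset.mem_sdiff.1 hj₀mem).1
    have hj₀U : j₀ ∉ U := (Finset.mem_sdiff.1 hj₀mem).2
    set r' : Fin m → ℕ := Function.update r i₀ (r i₀ - 1) with hr'
    set h' : Fin n → ℕ := Function.update h j₀ (h j₀ - 1) with hh'
    set W' : Fin m → Finset (Fin n) := Function.update W i₀ ((W i₀).erase j₀) with hW'
    have hr'i₀ : r' i₀ = r i₀ - 1 := by rw [hr', Function.update_self]
    have hW'i₀ : W' i₀ = (W i₀).erase j₀ := by rw [hW', Function.update_self]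
    have hsum' : ∑ i, r' i = N := by
      rw [hr', Finset.sum_update_of_mem (mem_univ i₀)]
      rw [← Finset.sum_erase_add _ _ (mem_univ i₀)] at hsum
      rw [Finset.sdiff_singleton_eq_erase]
      omega
    have C' : ∀ S : Finset (Fin n), ∑ i, (r' i - ((W' i) \ S).card) ≤ ∑ j ∈ S, h' j := by
      intro S
      have hCS := C S
      have hrestEq : ∑ i ∈ univ.erase i₀, (r' i - (W' i \ S).card)
          = ∑ i ∈ univ.erase i₀, (r i - (W i \ S).card) := by
        apply Finset.sum_congr rfl
        intro i hi
        have hne : i ≠ i₀ := (Finset.mem_erase.1 hi).1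
        rw [hr', hW', Function.update_of_ne hne, Function.update_of_ne hne]
      rw [← Finset.sum_erase_add _ _ (mem_univ i₀), hrestEq]
      rw [← Finset.sum_erase_add _ _ (mem_univ i₀)] at hCS
      by_cases hj₀S : j₀ ∈ S
      · have hWS : (W' i₀) \ S = (W i₀) \ S := by
          rw [hW'i₀]
          ext x
          simp only [mem_sdiff, mem_erase]
          constructor
          · rintro ⟨⟨_, hx⟩, hxs⟩; exact ⟨hx, hxs⟩
          · rintro ⟨hx, hxs⟩
            exact ⟨⟨fun e => hxs (by rw [e]; exact hj₀S), hx⟩, hxs⟩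
        have hsupS : ∑ j ∈ S, h' j + 1 = ∑ j ∈ S, h j := by
          rw [← Finset.sum_erase_add _ _ hj₀S, ← Finset.sum_erase_add _ _ hj₀S]
          have he : ∑ j ∈ S.erase j₀, h' j = ∑ j ∈ S.erase j₀, h j := by
            apply Finset.sum_congr rfl
            intro j hj
            rw [hh', Function.update_of_ne (Finset.mem_erase.1 hj).1]
          rw [he, hh', Function.update_self]
          omega
        have hnotbad : ¬ Bad S := fun hb => hj₀U (hUall S hb hj₀S)
        rw [hBadIff] at hnotbad
        push_neg at hnotbad
        have hsplitS : ∑ i ∈ univ.erase i₀, (r i - (W i \ S).card) + (r i₀ - (W i₀ \ S).card)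
            = ∑ i, (r i - (W i \ S).card) := Finset.sum_erase_add _ _ (mem_univ i₀)
        have hkey : ∑ i, (r i - (W i \ S).card) < ∑ j ∈ S, h j
            ∨ (W i₀ \ S).card < r i₀ := by
          by_cases he : ∑ i, (r i - (W i \ S).card) = ∑ j ∈ S, h j
          · have := hnotbad he; exact Or.inr (by omega)
          · exact Or.inl (lt_of_le_of_ne (C S) he)
        rw [hWS, hr'i₀]
        omega
      · have hsupS : ∑ j ∈ S, h' j = ∑ j ∈ S, h j := by
          apply Finset.sum_congr rfl
          intro j hj
          rw [hh', Function.update_of_ne (fun e => hj₀S (by rw [← e]; exact hj))]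
        have hj₀WS : j₀ ∈ (W i₀) \ S := Finset.mem_sdiff.2 ⟨hj₀W, hj₀S⟩
        have hWS : (W' i₀) \ S = ((W i₀) \ S).erase j₀ := by
          rw [hW'i₀]
          ext x
          simp only [mem_sdiff, mem_erase]
          tauto
        have hcard : (((W i₀) \ S).erase j₀).card = ((W i₀) \ S).card - 1 :=
          Finset.card_erase_of_mem hj₀WS
        have hpos : 1 ≤ ((W i₀) \ S).card := Finset.card_pos.2 ⟨j₀, hj₀WS⟩
        rw [hWS, hcard, hr'i₀, hsupS]
        omega
    obtain ⟨A', hA'le, hA'row, hA'supp, hA'col⟩ := ih r' h' W' hsum' C'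
    have hA'i₀j₀ : A' i₀ j₀ = 0 := by
      by_contra hne
      have hmem := hA'supp i₀ j₀ hne
      rw [hW'i₀] at hmem
      exact (Finset.mem_erase.1 hmem).1 rfl
    refine ⟨fun i j => if i = i₀ ∧ j = j₀ then A' i j + 1 else A' i j, ?_, ?_, ?_, ?_⟩
    · intro i j
      simp only
      by_cases hc : i = i₀ ∧ j = j₀
      · rw [if_pos hc, hc.1, hc.2, hA'i₀j₀]
      · rw [if_neg hc]
        exact hA'le i j
    · intro i
      simp only
      by_cases hi : i = i₀
      · have h1 : ∀ j, (if i = i₀ ∧ j = j₀ then A' i j + 1 else A' i j)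
            = if j = j₀ then A' i j + 1 else A' i j := by
          intro j
          by_cases hj : j = j₀ <;> simp [hi, hj]
        have hz : A' i j₀ = 0 := by rw [hi]; exact hA'i₀j₀
        have hri : r' i = r i - 1 := by rw [hi, hr'i₀]
        have hrow := hA'row i
        rw [← Finset.sum_erase_add _ _ (mem_univ j₀)] at hrow
        simp only [h1]
        rw [← Finset.sum_erase_add _ _ (mem_univ j₀), if_pos rfl, hz]
        have h2 : ∑ j ∈ univ.erase j₀, (if j = j₀ then A' i j + 1 else A' i j)
            = ∑ j ∈ univ.erase j₀, A' i j := by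
          apply Finset.sum_congr rfl
          intro j hj
          rw [if_neg (Finset.mem_erase.1 hj).1]
        rw [h2]
        have : 0 < r i := by rw [hi]; exact hi₀
        omega
      · have h1 : ∑ j, (if i = i₀ ∧ j = j₀ then A' i j + 1 else A' i j) = ∑ j, A' i j := by
          apply Finset.sum_congr rfl
          intro j _
          rw [if_neg (fun hc => hi hc.1)]
        rw [h1, hA'row i, hr', Function.update_of_ne hi]
    · intro i j hij
      simp only at hij
      by_cases hc : i = i₀ ∧ j = j₀
      · rw [hc.1, hc.2]
        exact hj₀W
      · rw [if_neg hc] at hij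
        have hmem := hA'supp i j hij
        by_cases hi : i = i₀
        · rw [hi] at hmem ⊢
          rw [hW'i₀] at hmem
          exact Finset.mem_of_mem_erase hmem
        · rwa [hW', Function.update_of_ne hi] at hmem
    · intro j
      simp only
      by_cases hj : j = j₀
      · have h1 : ∀ i : Fin m, (if i = i₀ ∧ j = j₀ then A' i j + 1 else A' i j)
            = if i = i₀ then A' i j + 1 else A' i j := by
          intro i
          by_cases hi : i = i₀ <;> simp [hi, hj]
        have hz : A' i₀ j = 0 := by rw [hj]; exact hA'i₀j₀
        have hhj : h' j = h j - 1 := by rw [hj, hh', Function.update_self]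
        have hhjpos : 0 < h j := by rw [hj]; exact hj₀pos
        have hcol := hA'col j
        rw [← Finset.sum_erase_add _ _ (mem_univ i₀)] at hcol
        simp only [h1]
        rw [← Finset.sum_erase_add _ _ (mem_univ i₀), if_pos rfl, hz]
        have h2 : ∑ i ∈ univ.erase i₀, (if i = i₀ then A' i j + 1 else A' i j)
            = ∑ i ∈ univ.erase i₀, A' i j := by
          apply Finset.sum_congr rfl
          intro i hi
          rw [if_neg (Finset.mem_erase.1 hi).1]
        rw [h2]
        omega
      · have h1 : ∑ i, (if i = i₀ ∧ j = j₀ then A' i j + 1 else A' i j) = ∑ i, A' i j := by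
          apply Finset.sum_congr rfl
          intro i _
          rw [if_neg (fun hc => hj hc.2)]
        rw [h1]
        have := hA'col j
        rwa [hh', Function.update_of_ne hj] at this

lemma block_exists {ν : ℕ} (nb : Fin (ν+1) → ℕ) (hnb0 : nb 0 = 0) (x : ℕ)
    (hx : x < nb (Fin.last ν)) :
    ∃ κ : Fin ν, nb κ.castSucc ≤ x ∧ x < nb κ.succ := by
  classical
  set Sg := univ.filter (fun κ' : Fin (ν+1) => nb κ' ≤ x) with hSg
  have hne : Sg.Nonempty := ⟨0, by simp [hSg, hnb0]⟩
  set κm := Sg.max' hne with hκm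
  have hmem : κm ∈ Sg := Sg.max'_mem hne
  have hle : nb κm ≤ x := (Finset.mem_filter.1 hmem).2
  have hκmlt : κm.val < ν := by
    by_contra hc
    push_neg at hc
    have : κm = Fin.last ν := Fin.ext (le_antisymm (Nat.lt_succ_iff.1 κm.isLt) hc)
    rw [this] at hle
    omega
  refine ⟨⟨κm.val, hκmlt⟩, ?_, ?_⟩
  · exact le_of_eq_of_le (congrArg nb (Fin.ext rfl)) hle
  · by_contra hc
    push_neg at hc
    have hmem2 : (⟨κm.val, hκmlt⟩ : Fin ν).succ ∈ Sg := Finset.mem_filter.2 ⟨mem_univ _, hc⟩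
    have := Sg.le_max' _ hmem2
    rw [← hκm] at this
    have : κm.val + 1 ≤ κm.val := this
    omega

lemma feasible_C {m n : ℕ} (r : Fin m → ℕ) (h : Fin n → ℕ) (W : Fin m → Finset (Fin n))
    (A : Fin m → Fin n → ℕ) (hle : ∀ i j, A i j ≤ 1) (hrow : ∀ i, ∑ j, A i j = r i)
    (hsupp : ∀ i j, A i j ≠ 0 → j ∈ W i) (hcol : ∀ j, ∑ i, A i j ≤ h j)
    (S : Finset (Fin n)) : ∑ i, (r i - ((W i) \ S).card) ≤ ∑ j ∈ S, h j := by
  have hper : ∀ i, r i - ((W i) \ S).card ≤ ∑ j ∈ S, A i j := by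
    intro i
    have hsplit : ∑ j ∈ univ \ S, A i j + ∑ j ∈ S, A i j = ∑ j, A i j :=
      Finset.sum_sdiff (Finset.subset_univ S)
    have hsub : ∑ j ∈ univ \ S, A i j = ∑ j ∈ (W i) \ S, A i j := by
      symm
      apply Finset.sum_subset
      · exact Finset.sdiff_subset_sdiff (Finset.subset_univ _) (Finset.Subset.refl _)
      · intro j hj hj'
        by_contra hne
        have hWi := hsupp i j hne
        exact hj' (Finset.mem_sdiff.2 ⟨hWi, (Finset.mem_sdiff.1 hj).2⟩)
    have hbound : ∑ j ∈ (W i) \ S, A i j ≤ ((W i) \ S).card := by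
      calc ∑ j ∈ (W i) \ S, A i j ≤ ∑ _j ∈ (W i) \ S, 1 :=
            Finset.sum_le_sum (fun j _ => hle i j)
        _ = ((W i) \ S).card := by rw [Finset.sum_const, smul_eq_mul, mul_one]
    have := hrow i
    omega
  calc ∑ i, (r i - ((W i) \ S).card) ≤ ∑ i, ∑ j ∈ S, A i j :=
        Finset.sum_le_sum (fun i _ => hper i)
    _ = ∑ j ∈ S, ∑ i, A i j := Finset.sum_comm
    _ ≤ ∑ j ∈ S, h j := Finset.sum_le_sum (fun j _ => hcol j)

/-- MAMD adequacy theorem (Theorem 1): under within-block monotonicity of the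
supply, a feasible (0,1) allocation matrix for the demand `(r,a,d)` exists iff
for every index vector `(k_1,…,k_ν)` with `0 ≤ k_κ ≤ n_κ − n_{κ−1}`,
`∑_{κ=1}^{ν} ∑_{j=n_{κ−1}+k_κ+1}^{n_κ} h_j ≥ ∑_i max(r_i − ∑_{κ=a_i+1}^{d_i} k_κ, 0)`.
(0-indexed slots; truncated ℕ-subtraction realizes the positive part.) -/
theorem stmt8 (m n ν : ℕ) (nb : Fin (ν + 1) → ℕ)
    (hnb0 : nb 0 = 0) (hnbn : nb (Fin.last ν) = n) (hnbmono : StrictMono nb)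
    (h : Fin n → ℕ)
    (hblock : ∀ κ : Fin ν, ∀ i j : Fin n,
      nb κ.castSucc ≤ i.val → i ≤ j → j.val < nb κ.succ → h j ≤ h i)
    (r : Fin m → ℕ) (a d : Fin m → Fin (ν + 1))
    (had : ∀ i, a i < d i) (hr : ∀ i, 0 < r i ∧ r i ≤ nb (d i) - nb (a i)) :
    (∃ A : Fin m → Fin n → ℕ,
      (∀ i j, A i j ≤ 1) ∧
      (∀ i, ∑ j, A i j = r i) ∧
      (∀ i (j : Fin n), A i j ≠ 0 → nb (a i) ≤ j.val ∧ j.val < nb (d i)) ∧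
      (∀ j, ∑ i, A i j ≤ h j)) ↔
    (∀ k : Fin ν → ℕ, (∀ κ, k κ ≤ nb κ.succ - nb κ.castSucc) →
      ∑ i, (r i - ∑ κ ∈ Finset.univ.filter
          (fun κ : Fin ν => (a i).val ≤ κ.val ∧ κ.val < (d i).val), k κ)
        ≤ ∑ κ : Fin ν, ∑ j ∈ Finset.univ.filter
            (fun j : Fin n => nb κ.castSucc + k κ ≤ j.val ∧ j.val < nb κ.succ), h j) := by
  classical
  have hnble : ∀ κ : Fin (ν+1), nb κ ≤ n := fun κ => by
    rw [← hnbn]; exact hnbmono.monotone (Fin.le_last κ)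
  have hmono : ∀ x y : Fin (ν+1), x.val ≤ y.val → nb x ≤ nb y := fun x y hxy =>
    hnbmono.monotone hxy
  have hexists : ∀ j : Fin n, ∃ κ : Fin ν, nb κ.castSucc ≤ j.val ∧ j.val < nb κ.succ :=
    fun j => block_exists nb hnb0 j.val (by rw [hnbn]; exact j.isLt)
  have hκwin : ∀ (i : Fin m) (κ : Fin ν) (j : Fin n),
      nb κ.castSucc ≤ j.val → j.val < nb κ.succ →
      ((nb (a i) ≤ j.val ∧ j.val < nb (d i)) ↔ ((a i).val ≤ κ.val ∧ κ.val < (d i).val)) := by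
    intro i κ j h1 h2
    constructor
    · rintro ⟨ha, hd⟩
      constructor
      · by_contra hc; push_neg at hc
        have : nb κ.succ ≤ nb (a i) := hmono _ _ (by simp [Fin.val_succ]; omega)
        omega
      · by_contra hc; push_neg at hc
        have : nb (d i) ≤ nb κ.castSucc := hmono _ _ (by simp; omega)
        omega
    · rintro ⟨ha, hd⟩
      have h3 : nb (a i) ≤ nb κ.castSucc := hmono _ _ (by simp; omega)
      have h4 : nb κ.succ ≤ nb (d i) := hmono _ _ (by simp [Fin.val_succ]; omega)
      omega
  have hBdisj : ∀ κ κ' : Fin ν, κ ≠ κ' →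
      Disjoint (univ.filter (fun j : Fin n => nb κ.castSucc ≤ j.val ∧ j.val < nb κ.succ))
        (univ.filter (fun j : Fin n => nb κ'.castSucc ≤ j.val ∧ j.val < nb κ'.succ)) := by
    intro κ κ' hne
    rw [Finset.disjoint_left]
    intro j hj hj'
    simp only [Finset.mem_filter, Finset.mem_univ, true_and] at hj hj'
    rcases Nat.lt_or_ge κ.val κ'.val with hlt | hge
    · have : nb κ.succ ≤ nb κ'.castSucc := hmono _ _ (by simp [Fin.val_succ]; omega)
      omega
    · have hlt2 : κ'.val < κ.val := lt_of_le_of_ne hge (fun e => hne (Fin.ext e.symm))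
      have : nb κ'.succ ≤ nb κ.castSucc := hmono _ _ (by simp [Fin.val_succ]; omega)
      omega
  have hcardB : ∀ κ : Fin ν,
      (univ.filter (fun j : Fin n => nb κ.castSucc ≤ j.val ∧ j.val < nb κ.succ)).card
      = nb κ.succ - nb κ.castSucc := fun κ => card_finfilter _ _ (hnble κ.succ)
  have hcardWS : ∀ (i : Fin m) (S : Finset (Fin n)),
      ((univ.filter (fun j : Fin n => nb (a i) ≤ j.val ∧ j.val < nb (d i))) \ S).card
      = ∑ κ ∈ univ.filter (fun κ : Fin ν => (a i).val ≤ κ.val ∧ κ.val < (d i).val),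
          ((univ.filter (fun j : Fin n => nb κ.castSucc ≤ j.val ∧ j.val < nb κ.succ)) \ S).card := by
    intro i S
    have hd : ∀ κ ∈ univ.filter (fun κ : Fin ν => (a i).val ≤ κ.val ∧ κ.val < (d i).val),
        ∀ κ' ∈ univ.filter (fun κ : Fin ν => (a i).val ≤ κ.val ∧ κ.val < (d i).val), κ ≠ κ' →
        Disjoint ((univ.filter (fun j : Fin n => nb κ.castSucc ≤ j.val ∧ j.val < nb κ.succ)) \ S)
          ((univ.filter (fun j : Fin n => nb κ'.castSucc ≤ j.val ∧ j.val < nb κ'.succ)) \ S) :=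
      fun κ _ κ' _ hne => (hBdisj κ κ' hne).mono Finset.sdiff_subset Finset.sdiff_subset
    rw [← Finset.card_biUnion hd]
    congr 1
    ext j
    simp only [Finset.mem_biUnion, Finset.mem_sdiff, Finset.mem_filter, Finset.mem_univ, true_and]
    constructor
    · rintro ⟨⟨h1, h2⟩, hS⟩
      obtain ⟨κ, hk1, hk2⟩ := hexists j
      exact ⟨κ, (hκwin i κ j hk1 hk2).1 ⟨h1, h2⟩, ⟨hk1, hk2⟩, hS⟩
    · rintro ⟨κ, hκ, ⟨h1, h2⟩, hS⟩
      exact ⟨(hκwin i κ j h1 h2).2 hκ, hS⟩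
  constructor
  · rintro ⟨A, hle, hrow, hsupp, hcol⟩ k hk
    have hsuppW : ∀ i j, A i j ≠ 0 →
        j ∈ univ.filter (fun j : Fin n => nb (a i) ≤ j.val ∧ j.val < nb (d i)) := by
      intro i j hne
      simp only [Finset.mem_filter, Finset.mem_univ, true_and]
      exact hsupp i j hne
    set S : Finset (Fin n) := univ.biUnion (fun κ : Fin ν =>
      univ.filter (fun j : Fin n => nb κ.castSucc + k κ ≤ j.val ∧ j.val < nb κ.succ)) with hS
    have hC := feasible_C r h _ A hle hrow hsuppW hcol S
    have hBS : ∀ κ : Fin ν,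
        ((univ.filter (fun j : Fin n => nb κ.castSucc ≤ j.val ∧ j.val < nb κ.succ)) \ S)
        = univ.filter (fun j : Fin n => nb κ.castSucc ≤ j.val ∧ j.val < nb κ.castSucc + k κ) := by
      intro κ
      have hksz := hk κ
      have hcs : nb κ.castSucc ≤ nb κ.succ := hmono _ _ (by simp [Fin.val_succ])
      ext j
      simp only [hS, Finset.mem_sdiff, Finset.mem_biUnion, Finset.mem_filter, Finset.mem_univ,
        true_and]
      constructor
      · rintro ⟨⟨h1, h2⟩, hns⟩
        push_neg at hns
        refine ⟨h1, ?_⟩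
        by_contra hc; push_neg at hc
        have := hns κ
        omega
      · rintro ⟨h1, h2⟩
        refine ⟨⟨h1, by omega⟩, ?_⟩
        rintro ⟨κ', hj1, hj2⟩
        by_cases he : κ' = κ
        · rw [he] at hj1 hj2; omega
        · rcases Nat.lt_or_ge κ.val κ'.val with hlt | hge
          · have : nb κ.succ ≤ nb κ'.castSucc := hmono _ _ (by simp [Fin.val_succ]; omega)
            omega
          · have hlt2 : κ'.val < κ.val := lt_of_le_of_ne hge (fun e => he (Fin.ext e))
            have : nb κ'.succ ≤ nb κ.castSucc := hmono _ _ (by simp [Fin.val_succ]; omega)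
            omega
    have hcardBS : ∀ κ : Fin ν,
        ((univ.filter (fun j : Fin n => nb κ.castSucc ≤ j.val ∧ j.val < nb κ.succ)) \ S).card
          = k κ := by
      intro κ
      have hksz := hk κ
      have hcs : nb κ.castSucc ≤ nb κ.succ := hmono _ _ (by simp [Fin.val_succ])
      have hub : nb κ.castSucc + k κ ≤ n := by
        have := hnble κ.succ
        omega
      rw [hBS κ, card_finfilter _ _ hub]
      omega
    have hlhs : ∑ i, (r i - ∑ κ ∈ Finset.univ.filter
          (fun κ : Fin ν => (a i).val ≤ κ.val ∧ κ.val < (d i).val), k κ)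
        = ∑ i, (r i -
          ((univ.filter (fun j : Fin n => nb (a i) ≤ j.val ∧ j.val < nb (d i))) \ S).card) := by
      apply Finset.sum_congr rfl
      intro i _
      rw [hcardWS i S, Finset.sum_congr rfl (fun κ _ => hcardBS κ)]
    have hrhs : ∑ j ∈ S, h j = ∑ κ : Fin ν, ∑ j ∈ Finset.univ.filter
        (fun j : Fin n => nb κ.castSucc + k κ ≤ j.val ∧ j.val < nb κ.succ), h j := by
      rw [hS]
      apply Finset.sum_biUnion
      intro κ hκ κ' hκ' hne
      refine (hBdisj κ κ' hne).mono ?_ ?_ <;>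
        · intro j hj
          simp only [Finset.mem_filter, Finset.mem_univ, true_and] at hj ⊢
          omega
    rw [hlhs, ← hrhs]
    exact hC
  · intro hcond
    have hC : ∀ S : Finset (Fin n), ∑ i, (r i -
        ((univ.filter (fun j : Fin n => nb (a i) ≤ j.val ∧ j.val < nb (d i))) \ S).card)
        ≤ ∑ j ∈ S, h j := by
      intro S
      set k : Fin ν → ℕ := fun κ =>
        ((univ.filter (fun j : Fin n => nb κ.castSucc ≤ j.val ∧ j.val < nb κ.succ)) \ S).card
        with hkdef
      have hkB : ∀ κ, k κ =
          ((univ.filter (fun j : Fin n => nb κ.castSucc ≤ j.val ∧ j.val < nb κ.succ)) \ S).card :=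
        fun κ => by rw [hkdef]
      have hkb : ∀ κ, k κ ≤ nb κ.succ - nb κ.castSucc := by
        intro κ
        rw [hkB κ, ← hcardB κ]
        exact Finset.card_le_card Finset.sdiff_subset
      have hmain := hcond k hkb
      have hlhs : ∑ i, (r i -
          ((univ.filter (fun j : Fin n => nb (a i) ≤ j.val ∧ j.val < nb (d i))) \ S).card)
          = ∑ i, (r i - ∑ κ ∈ Finset.univ.filter
            (fun κ : Fin ν => (a i).val ≤ κ.val ∧ κ.val < (d i).val), k κ) := by
        apply Finset.sum_congr rfl
        intro i _
        rw [hcardWS i S, Finset.sum_congr rfl (fun κ _ => (hkB κ).symm)]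
      set H : ℕ → ℕ := fun x => if hx : x < n then h ⟨x, hx⟩ else 0 with hHdef
      have hH : ∀ (x : ℕ) (hx : x < n), H x = h ⟨x, hx⟩ := fun x hx => by
        rw [hHdef]; exact dif_pos hx
      have hperκ : ∀ κ : Fin ν,
          ∑ j ∈ Finset.univ.filter
            (fun j : Fin n => nb κ.castSucc + k κ ≤ j.val ∧ j.val < nb κ.succ), h j
          ≤ ∑ j ∈ S ∩ (univ.filter
            (fun j : Fin n => nb κ.castSucc ≤ j.val ∧ j.val < nb κ.succ)), h j := by
        intro κ
        have hcs : nb κ.castSucc ≤ nb κ.succ := hmono _ _ (by simp [Fin.val_succ])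
        have hTsub : (S ∩ (univ.filter
            (fun j : Fin n => nb κ.castSucc ≤ j.val ∧ j.val < nb κ.succ))).image Fin.val
            ⊆ Finset.Ico (nb κ.castSucc) (nb κ.succ) := by
          intro x hx
          simp only [Finset.mem_image, Finset.mem_inter, Finset.mem_filter, Finset.mem_univ,
            true_and] at hx
          obtain ⟨j, ⟨-, hj1, hj2⟩, rfl⟩ := hx
          exact Finset.mem_Ico.2 ⟨hj1, hj2⟩
        have hTcard : ((S ∩ (univ.filter
            (fun j : Fin n => nb κ.castSucc ≤ j.val ∧ j.val < nb κ.succ))).image Fin.val).card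
            + k κ = nb κ.succ - nb κ.castSucc := by
          rw [Finset.card_image_of_injective _ Fin.val_injective, hkB κ, ← hcardB κ,
            Finset.inter_comm]
          exact Finset.card_inter_add_card_sdiff _ _
        have hmono' : ∀ x y, nb κ.castSucc ≤ x → x ≤ y → y < nb κ.succ → H y ≤ H x := by
          intro x y h1 h2 h3
          have hyn : y < n := lt_of_lt_of_le h3 (hnble κ.succ)
          have hxn : x < n := lt_of_le_of_lt h2 hyn
          rw [hH x hxn, hH y hyn]
          exact hblock κ ⟨x, hxn⟩ ⟨y, hyn⟩ h1 h2 h3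
        have hsfx := suffix_min H (nb κ.castSucc) (nb κ.succ) hmono' _ hTsub
        have heqlo : nb κ.succ - ((S ∩ (univ.filter
            (fun j : Fin n => nb κ.castSucc ≤ j.val ∧ j.val < nb κ.succ))).image Fin.val).card
            = nb κ.castSucc + k κ := by
          have := hkb κ
          omega
        rw [heqlo] at hsfx
        have hsum1 : ∑ j ∈ Finset.univ.filter
            (fun j : Fin n => nb κ.castSucc + k κ ≤ j.val ∧ j.val < nb κ.succ), h j
            = ∑ x ∈ Finset.Ico (nb κ.castSucc + k κ) (nb κ.succ), H x :=
          sum_finfilter h H hH _ _ (hnble κ.succ)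
        have hsum2 : ∑ x ∈ (S ∩ (univ.filter
            (fun j : Fin n => nb κ.castSucc ≤ j.val ∧ j.val < nb κ.succ))).image Fin.val, H x
            = ∑ j ∈ S ∩ (univ.filter
            (fun j : Fin n => nb κ.castSucc ≤ j.val ∧ j.val < nb κ.succ)), h j := by
          rw [Finset.sum_image (fun x _ y _ e => Fin.val_injective e)]
          apply Finset.sum_congr rfl
          intro j _
          rw [hH j.val j.isLt]
        rw [hsum1]
        rw [hsum2] at hsfx
        exact hsfx
      have hrhs : ∑ κ : Fin ν, ∑ j ∈ Finset.univ.filter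
          (fun j : Fin n => nb κ.castSucc + k κ ≤ j.val ∧ j.val < nb κ.succ), h j
          ≤ ∑ j ∈ S, h j := by
        have h1 : ∑ κ : Fin ν, ∑ j ∈ Finset.univ.filter
            (fun j : Fin n => nb κ.castSucc + k κ ≤ j.val ∧ j.val < nb κ.succ), h j
            ≤ ∑ κ : Fin ν, ∑ j ∈ S ∩ (univ.filter
              (fun j : Fin n => nb κ.castSucc ≤ j.val ∧ j.val < nb κ.succ)), h j :=
          Finset.sum_le_sum (fun κ _ => hperκ κ)
        have h2 : ∑ j ∈ univ.biUnion (fun κ : Fin ν => S ∩ (univ.filter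
            (fun j : Fin n => nb κ.castSucc ≤ j.val ∧ j.val < nb κ.succ))), h j
            = ∑ κ : Fin ν, ∑ j ∈ S ∩ (univ.filter
              (fun j : Fin n => nb κ.castSucc ≤ j.val ∧ j.val < nb κ.succ)), h j := by
          apply Finset.sum_biUnion
          intro κ hκ κ' hκ' hne
          exact (hBdisj κ κ' hne).mono Finset.inter_subset_right Finset.inter_subset_right
        have h3 : ∑ j ∈ univ.biUnion (fun κ : Fin ν => S ∩ (univ.filter
            (fun j : Fin n => nb κ.castSucc ≤ j.val ∧ j.val < nb κ.succ))), h j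
            ≤ ∑ j ∈ S, h j := by
          apply Finset.sum_le_sum_of_subset
          intro j hj
          simp only [Finset.mem_biUnion, Finset.mem_inter] at hj
          obtain ⟨κ, -, hjS, -⟩ := hj
          exact hjS
        omega
      rw [hlhs]
      exact le_trans hmain hrhs
    obtain ⟨A, hle, hrow, hsupp, hcol⟩ := aux_exists (∑ i, r i) r h
      (fun i => univ.filter (fun j : Fin n => nb (a i) ≤ j.val ∧ j.val < nb (d i))) rfl hC
    refine ⟨A, hle, hrow, ?_, hcol⟩
    intro i j hne
    have := hsupp i j hne
    simp only [Finset.mem_filter, Finset.mem_univ, true_and] at this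
    exact this
end

section
/- Let X ⊆ {1,...,m} and Y ⊆ {1,...,n} be arbitrary. If every s-t cut capacity c(X,Y) (as given by the formula ∑_{j∉Y} h_j + ∑_{i∉X} r_i + ∑_{i∈X}∑_{j∈Y} 1(n_{a_i} < j ≤ n_{d_i})) is at least ∑_{i=1}^{m} r_i, then for all index vectors (k_1,...,k_ν), W_{k_1...k_ν}(h,r,a,d) ≥ 0; conversely, nonnegativity of the tensor for all index vectors implies all cut capacities are at least ∑_i r_i, provided h satisfies within-block monotonicity. -/
/-!
For an index vector `k`, let `Y_k` consist of the first `k_κ` positions of every block `κ`.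
Then the cut capacity of `(X, Y_k)` is `∑_{j ∉ Y_k} h_j + ∑_{i ∉ X} r_i + ∑_{i ∈ X} T_i`, where
`T_i = ∑_{κ = a_i+1}^{d_i} k_κ`, and `∑_{j ∉ Y_k} h_j` is exactly the `h`-part of `W_k`.
Minimising over `X` (take `X = {i | T_i < r_i}`) turns the cut inequalities for `Y_k` into
`W_k ≥ 0`. Conversely an arbitrary `Y` meets block `κ` in some `t_κ` positions; replacing `Y`
by `Y_t` only changes the cut through `∑_{j ∉ Y} h_j`, and when `h` is non-increasing within
blocks the last `len_κ - t_κ` positions of a block carry the least weight, so `Y_t` is the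
worst case.
-/

open Finset

section Exchange

variable {ι M : Type*} [AddCommMonoid M] [LinearOrder M] [IsOrderedCancelAddMonoid M]
  {s t : Finset ι} {f : ι → M}

theorem Finset.sum_le_sum_of_card_eq_of_forall_le (hcard : #s = #t)
    (hf : ∀ i ∈ s, ∀ j ∈ t, f i ≤ f j) : ∑ i ∈ s, f i ≤ ∑ j ∈ t, f j := by
  obtain rfl | ht := t.eq_empty_or_nonempty
  · simp_all
  calc ∑ i ∈ s, f i ≤ #s • t.inf' ht f :=
        sum_le_card_nsmul _ _ _ fun i hi => le_inf' ht f fun j hj => hf i hi j hj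
    _ = #t • t.inf' ht f := by rw [hcard]
    _ ≤ ∑ j ∈ t, f j := card_nsmul_le_sum _ _ _ fun j hj => inf'_le f hj

theorem Finset.sum_le_sum_of_card_eq_of_forall_sdiff_le [DecidableEq ι] (hcard : #s = #t)
    (hf : ∀ i ∈ s \ t, ∀ j ∈ t \ s, f i ≤ f j) : ∑ i ∈ s, f i ≤ ∑ j ∈ t, f j :=
  sum_sdiff_le_sum_sdiff.mp (sum_le_sum_of_card_eq_of_forall_le (card_sdiff_comm hcard) hf)

end Exchange

theorem sum_tsub_le_iff_forall_finset {ι : Type*} [Fintype ι] [DecidableEq ι] (r T : ι → ℕ)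
    (C : ℕ) :
    ∑ i, (r i - T i) ≤ C ↔ ∀ X : Finset ι, ∑ i, r i ≤ C + ∑ i ∈ Xᶜ, r i + ∑ i ∈ X, T i := by
  constructor
  · intro hC X
    have hX : ∑ i ∈ X, r i ≤ ∑ i ∈ X, (r i - T i) + ∑ i ∈ X, T i := by
      rw [← sum_add_distrib]; exact sum_le_sum fun i _ => le_tsub_add
    have := sum_le_sum_of_subset (f := fun i => r i - T i) (subset_univ X)
    rw [← sum_add_sum_compl X r]
    omega
  · intro hX
    set X := univ.filter fun i => T i < r i
    have hsplit : ∑ i ∈ X, (r i - T i) + ∑ i ∈ X, T i = ∑ i ∈ X, r i := by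
      rw [← sum_add_distrib]
      exact sum_congr rfl fun i hi => tsub_add_cancel_of_le (mem_filter.mp hi).2.le
    have hcompl : ∑ i ∈ Xᶜ, (r i - T i) = 0 :=
      sum_eq_zero fun i hi => tsub_eq_zero_of_le (by simpa [X] using hi)
    have := hX X
    rw [← sum_add_sum_compl X r] at this
    rw [← sum_add_sum_compl X, hcompl]
    omega

theorem Fin.card_filter_le_val_lt {n x y : ℕ} (hy : y ≤ n) :
    #(univ.filter fun j : Fin n => x ≤ j.val ∧ j.val < y) = y - x := by
  rw [← Nat.card_Ico, ← card_map Fin.valEmbedding]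
  congr 1
  ext i
  simp only [mem_map, mem_filter, mem_univ, true_and, Fin.valEmbedding_apply, mem_Ico]
  exact ⟨by rintro ⟨j, hj, rfl⟩; exact hj, fun hi => ⟨⟨i, hi.2.trans_le hy⟩, hi, rfl⟩⟩

section Blocks

variable {n ν : ℕ} {nb : Fin (ν + 1) → ℕ}

/- Blocks and positions are `0`-based: `block n nb κ` is the paper's block `κ + 1`, i.e. the
indices `n_κ + 1, …, n_{κ+1}` shifted down by one. -/
variable (n) in
def block (nb : Fin (ν + 1) → ℕ) (κ : Fin ν) : Finset (Fin n) :=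
  univ.filter fun j => nb κ.castSucc ≤ j.val ∧ j.val < nb κ.succ

variable (n) in
def blockTail (nb : Fin (ν + 1) → ℕ) (κ : Fin ν) (t : ℕ) : Finset (Fin n) :=
  univ.filter fun j => nb κ.castSucc + t ≤ j.val ∧ j.val < nb κ.succ

theorem mem_block {κ : Fin ν} {j : Fin n} :
    j ∈ block n nb κ ↔ nb κ.castSucc ≤ j.val ∧ j.val < nb κ.succ := by
  simp [block]

theorem mem_blockTail {κ : Fin ν} {t : ℕ} {j : Fin n} :
    j ∈ blockTail n nb κ t ↔ nb κ.castSucc + t ≤ j.val ∧ j.val < nb κ.succ := by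
  simp [blockTail]

theorem card_block (hlast : nb (Fin.last ν) = n) (hmono : Monotone nb) (κ : Fin ν) :
    #(block n nb κ) = nb κ.succ - nb κ.castSucc :=
  Fin.card_filter_le_val_lt (hlast ▸ hmono (Fin.le_last _))

theorem card_blockTail (hlast : nb (Fin.last ν) = n) (hmono : Monotone nb) (κ : Fin ν)
    (t : ℕ) : #(blockTail n nb κ t) = nb κ.succ - nb κ.castSucc - t := by
  rw [blockTail, Fin.card_filter_le_val_lt (hlast ▸ hmono (Fin.le_last _)), Nat.sub_sub]

theorem card_block_inter_compl (hlast : nb (Fin.last ν) = n) (hmono : Monotone nb)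
    (κ : Fin ν) (Y : Finset (Fin n)) :
    #(block n nb κ ∩ Yᶜ) = nb κ.succ - nb κ.castSucc - #(block n nb κ ∩ Y) := by
  have := card_inter_add_card_sdiff (block n nb κ) Y
  rw [← sdiff_eq_inter_compl, ← card_block hlast hmono]
  omega

theorem eq_of_mem_block (hmono : Monotone nb) {j : Fin n} {κ κ' : Fin ν}
    (h : j ∈ block n nb κ) (h' : j ∈ block n nb κ') : κ = κ' := by
  rw [mem_block] at h h'
  by_contra hne
  rcases Fin.lt_or_lt_of_ne hne with hlt | hlt
  · have := hmono (Fin.succ_le_castSucc_iff.mpr hlt)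
    omega
  · have := hmono (Fin.succ_le_castSucc_iff.mpr hlt)
    omega

theorem exists_mem_block (h0 : nb 0 = 0) (hlast : nb (Fin.last ν) = n) (j : Fin n) :
    ∃ κ, j ∈ block n nb κ := by
  have hex : ∃ c, j.val < nb c := ⟨Fin.last ν, hlast ▸ j.isLt⟩
  have hspec := Fin.find_spec hex
  have hc0 : Fin.find _ hex ≠ 0 := fun h => by rw [h, h0] at hspec; omega
  obtain ⟨κ, hκ⟩ := Fin.exists_succ_eq.mpr hc0
  refine ⟨κ, mem_block.mpr ⟨not_lt.mp (Fin.find_min hex ?_), hκ ▸ hspec⟩⟩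
  rw [← hκ]
  exact Fin.castSucc_lt_succ

theorem sum_eq_sum_block_inter (h0 : nb 0 = 0) (hlast : nb (Fin.last ν) = n)
    (hmono : Monotone nb) {M : Type*} [AddCommMonoid M] (s : Finset (Fin n)) (g : Fin n → M) :
    ∑ j ∈ s, g j = ∑ κ, ∑ j ∈ block n nb κ ∩ s, g j := by
  rw [← sum_biUnion fun κ _ κ' _ hne => disjoint_left.mpr fun j hj hj' =>
    hne (eq_of_mem_block hmono (mem_inter.mp hj).1 (mem_inter.mp hj').1)]
  congr 1
  ext j
  simp only [mem_biUnion, mem_univ, true_and, mem_inter]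
  exact ⟨fun hj => ⟨_, (exists_mem_block h0 hlast j).choose_spec, hj⟩, fun ⟨_, _, hj⟩ => hj⟩

theorem span_iff_of_mem_block (hmono : Monotone nb) {a d : Fin (ν + 1)} {κ : Fin ν}
    {j : Fin n} (hj : j ∈ block n nb κ) :
    (nb a < j.val + 1 ∧ j.val + 1 ≤ nb d) ↔ (a.val ≤ κ.val ∧ κ.val < d.val) := by
  rw [mem_block] at hj
  constructor
  · rintro ⟨ha, hd⟩
    constructor
    · by_contra! h
      have := hmono (show κ.succ ≤ a from Fin.le_def.mpr (by simp; omega))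
      omega
    · by_contra! h
      have := hmono (show d ≤ κ.castSucc from Fin.le_def.mpr (by simp; omega))
      omega
  · rintro ⟨ha, hd⟩
    have := hmono (show a ≤ κ.castSucc from Fin.le_def.mpr (by simp; omega))
    have := hmono (show κ.succ ≤ d from Fin.le_def.mpr (by simp; omega))
    omega

theorem sum_ite_span_eq_sum_card_block_inter (h0 : nb 0 = 0) (hlast : nb (Fin.last ν) = n)
    (hmono : Monotone nb)
    (a d : Fin (ν + 1)) (Y : Finset (Fin n)) :
    ∑ j ∈ Y, (if nb a < j.val + 1 ∧ j.val + 1 ≤ nb d then 1 else 0)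
      = ∑ κ ∈ univ.filter (fun κ : Fin ν => a.val ≤ κ.val ∧ κ.val < d.val),
          #(block n nb κ ∩ Y) := by
  rw [sum_eq_sum_block_inter h0 hlast hmono, sum_filter]
  refine sum_congr rfl fun κ _ => ?_
  rw [card_eq_sum_ones]
  have hspan {j} (hj : j ∈ block n nb κ ∩ Y) := span_iff_of_mem_block (a := a) (d := d) hmono
    (mem_inter.mp hj).1
  split_ifs with hκ
  · exact sum_congr rfl fun j hj => if_pos ((hspan hj).mpr hκ)
  · exact sum_eq_zero fun j hj => if_neg (mt (hspan hj).mp hκ)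

theorem exists_block_inter_compl_eq_blockTail (hlast : nb (Fin.last ν) = n)
    (hmono : Monotone nb) (k : Fin ν → ℕ) (hk : ∀ κ, k κ ≤ nb κ.succ - nb κ.castSucc) :
    ∃ Y : Finset (Fin n), ∀ κ,
      block n nb κ ∩ Yᶜ = blockTail n nb κ (k κ) ∧ #(block n nb κ ∩ Y) = k κ := by
  set Y : Finset (Fin n) :=
    univ.filter fun j => ∀ κ, j ∈ block n nb κ → j.val < nb κ.castSucc + k κ
  have hcompl : ∀ κ, block n nb κ ∩ Yᶜ = blockTail n nb κ (k κ) := by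
    intro κ
    ext j
    simp only [Y, mem_inter, mem_compl, mem_filter, mem_univ, true_and, mem_blockTail]
    constructor
    · rintro ⟨hj, hY⟩
      exact ⟨not_lt.mp fun hlt => hY fun κ' hj' => eq_of_mem_block hmono hj hj' ▸ hlt,
        (mem_block.mp hj).2⟩
    · rintro ⟨hlo, hhi⟩
      have hj : j ∈ block n nb κ := mem_block.mpr ⟨by omega, hhi⟩
      exact ⟨hj, fun hY => by have := hY κ hj; omega⟩
  refine ⟨Y, fun κ => ⟨hcompl κ, ?_⟩⟩
  have hc := card_block_inter_compl hlast hmono κ Y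
  have hle := card_le_card (inter_subset_left : block n nb κ ∩ Y ⊆ block n nb κ)
  rw [hcompl, card_blockTail hlast hmono] at hc
  rw [card_block hlast hmono] at hle
  have := hk κ
  omega

theorem sum_blockTail_le_sum_block_inter_compl (hlast : nb (Fin.last ν) = n)
    (hmono : Monotone nb) {h : Fin n → ℕ} {κ : Fin ν} (hh : AntitoneOn h (block n nb κ))
    (Y : Finset (Fin n)) :
    ∑ j ∈ blockTail n nb κ #(block n nb κ ∩ Y), h j ≤ ∑ j ∈ block n nb κ ∩ Yᶜ, h j := by
  refine sum_le_sum_of_card_eq_of_forall_sdiff_le ?_ fun i hi j hj => ?_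
  · rw [card_blockTail hlast hmono, card_block_inter_compl hlast hmono]
  simp only [mem_sdiff, mem_inter, mem_compl, mem_blockTail] at hi hj
  have hj_lt : j.val < nb κ.castSucc + #(block n nb κ ∩ Y) := by
    by_contra! hle
    exact hj.2 ⟨hle, (mem_block.mp hj.1.1).2⟩
  have hi_mem : i ∈ block n nb κ := mem_block.mpr ⟨by omega, hi.1.2⟩
  exact hh hj.1.1 hi_mem (Fin.le_def.mpr (by omega))

end Blocks

theorem stmt11_general (m n ν : ℕ) (nb : Fin (ν + 1) → ℕ)
    (hnb0 : nb 0 = 0) (hnbn : nb (Fin.last ν) = n) (hnbmono : StrictMono nb)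
    (h : Fin n → ℕ) (r : Fin m → ℕ) (a d : Fin m → Fin (ν + 1)) :
    (((∀ (X : Finset (Fin m)) (Y : Finset (Fin n)),
        ∑ i, r i ≤ ∑ j ∈ Yᶜ, h j + ∑ i ∈ Xᶜ, r i
          + ∑ i ∈ X, ∑ j ∈ Y,
              (if nb (a i) < j.val + 1 ∧ j.val + 1 ≤ nb (d i) then 1 else 0)) →
      (∀ k : Fin ν → ℕ, (∀ κ, k κ ≤ nb κ.succ - nb κ.castSucc) →
        ∑ i, (r i - ∑ κ ∈ Finset.univ.filter
            (fun κ : Fin ν => (a i).val ≤ κ.val ∧ κ.val < (d i).val), k κ)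
          ≤ ∑ κ : Fin ν, ∑ j ∈ Finset.univ.filter
              (fun j : Fin n => nb κ.castSucc + k κ ≤ j.val ∧ j.val < nb κ.succ), h j))) ∧
    ((∀ κ : Fin ν, ∀ i j : Fin n,
        nb κ.castSucc ≤ i.val → i ≤ j → j.val < nb κ.succ → h j ≤ h i) →
      (∀ k : Fin ν → ℕ, (∀ κ, k κ ≤ nb κ.succ - nb κ.castSucc) →
        ∑ i, (r i - ∑ κ ∈ Finset.univ.filter
            (fun κ : Fin ν => (a i).val ≤ κ.val ∧ κ.val < (d i).val), k κ)
          ≤ ∑ κ : Fin ν, ∑ j ∈ Finset.univ.filter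
              (fun j : Fin n => nb κ.castSucc + k κ ≤ j.val ∧ j.val < nb κ.succ), h j) →
      (∀ (X : Finset (Fin m)) (Y : Finset (Fin n)),
        ∑ i, r i ≤ ∑ j ∈ Yᶜ, h j + ∑ i ∈ Xᶜ, r i
          + ∑ i ∈ X, ∑ j ∈ Y,
              (if nb (a i) < j.val + 1 ∧ j.val + 1 ≤ nb (d i) then 1 else 0))) := by
  have hmono := hnbmono.monotone
  simp only [sum_ite_span_eq_sum_card_block_inter hnb0 hnbn hmono]
  refine ⟨fun hcut k hk => ?_, fun hh hW X Y => ?_⟩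
  · obtain ⟨Y, hY⟩ := exists_block_inter_compl_eq_blockTail hnbn hmono k hk
    refine (sum_tsub_le_iff_forall_finset _ _ _).mpr fun X => ?_
    simpa only [sum_eq_sum_block_inter hnb0 hnbn hmono Yᶜ, fun κ => (hY κ).1,
      fun κ => (hY κ).2, blockTail] using hcut X Y
  · set t := fun κ => #(block n nb κ ∩ Y)
    have ht : ∀ κ, t κ ≤ nb κ.succ - nb κ.castSucc := fun κ =>
      card_block hnbn hmono κ ▸ card_le_card inter_subset_left
    have hYc : ∑ κ, ∑ j ∈ blockTail n nb κ (t κ), h j ≤ ∑ j ∈ Yᶜ, h j := by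
      rw [sum_eq_sum_block_inter hnb0 hnbn hmono Yᶜ]
      refine sum_le_sum fun κ _ => sum_blockTail_le_sum_block_inter_compl hnbn hmono ?_ Y
      exact fun i hi j hj hij => hh κ i j (mem_block.mp hi).1 hij (mem_block.mp hj).2
    exact (sum_tsub_le_iff_forall_finset _ _ _).mp ((hW t ht).trans hYc) X

/-- Equivalence between the exponential family of cut inequalities
`c(X,Y) ≥ ∑_i r_i` and the polynomial family of structure-tensor inequalities
`W_{k_1…k_ν}(h,r,a,d) ≥ 0`.  The forward implication holds unconditionally;
the converse holds provided `h` is within-block monotone. -/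
theorem stmt11 (m n ν : ℕ) (nb : Fin (ν + 1) → ℕ)
    (hnb0 : nb 0 = 0) (hnbn : nb (Fin.last ν) = n) (hnbmono : StrictMono nb)
    (h : Fin n → ℕ) (r : Fin m → ℕ) (a d : Fin m → Fin (ν + 1))
    (had : ∀ i, a i < d i) (hr : ∀ i, 0 < r i ∧ r i ≤ nb (d i) - nb (a i)) :
    (((∀ (X : Finset (Fin m)) (Y : Finset (Fin n)),
        ∑ i, r i ≤ ∑ j ∈ Yᶜ, h j + ∑ i ∈ Xᶜ, r i
          + ∑ i ∈ X, ∑ j ∈ Y,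
              (if nb (a i) < j.val + 1 ∧ j.val + 1 ≤ nb (d i) then 1 else 0)) →
      (∀ k : Fin ν → ℕ, (∀ κ, k κ ≤ nb κ.succ - nb κ.castSucc) →
        ∑ i, (r i - ∑ κ ∈ Finset.univ.filter
            (fun κ : Fin ν => (a i).val ≤ κ.val ∧ κ.val < (d i).val), k κ)
          ≤ ∑ κ : Fin ν, ∑ j ∈ Finset.univ.filter
              (fun j : Fin n => nb κ.castSucc + k κ ≤ j.val ∧ j.val < nb κ.succ), h j))) ∧
    ((∀ κ : Fin ν, ∀ i j : Fin n,
        nb κ.castSucc ≤ i.val → i ≤ j → j.val < nb κ.succ → h j ≤ h i) →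
      (∀ k : Fin ν → ℕ, (∀ κ, k κ ≤ nb κ.succ - nb κ.castSucc) →
        ∑ i, (r i - ∑ κ ∈ Finset.univ.filter
            (fun κ : Fin ν => (a i).val ≤ κ.val ∧ κ.val < (d i).val), k κ)
          ≤ ∑ κ : Fin ν, ∑ j ∈ Finset.univ.filter
              (fun j : Fin n => nb κ.castSucc + k κ ≤ j.val ∧ j.val < nb κ.succ), h j) →
      (∀ (X : Finset (Fin m)) (Y : Finset (Fin n)),
        ∑ i, r i ≤ ∑ j ∈ Yᶜ, h j + ∑ i ∈ Xᶜ, r i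
          + ∑ i ∈ X, ∑ j ∈ Y,
              (if nb (a i) < j.val + 1 ∧ j.val + 1 ≤ nb (d i) then 1 else 0))) :=
  stmt11_general m n ν nb hnb0 hnbn hnbmono h r a d
end
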